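/- arXiv:2111.10739 — 4 statements merged into one kernel-verified Lean document; each statement's English description precedes it below -/
import Mathlib

section
/- Let n = 2, d ≥ 1, and let J_{d,2} be the ideal of R = ℚ[a_{1,1},a_{1,2},a_{2,1},a_{2,2}] generated by the coefficients of all monomials x₁^{p}x₂^{q}t^{N} (other than the constant term 1) of det(D(f)(x)) for the d-linear map f. Fix a (d−1)-tuple β with entries in {1,2} and an exponent 0 ≤ m ≤ d−1. Then the element (a_{1,1}a_{1,2}·Π_{j=1}^{d−1} a_{1,β(j)})·a_{1,1}^{m} a_{1,2}^{d−1−m} + (a_{1,2}a_{2,2}·Π_{j=1}^{d−1} a_{1,β(j)})·a_{2,1}^{m} a_{2,2}^{d−1−m} lies in J_{d,2}. -/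
open Finset MvPolynomial

/-- The coefficient ring `R = ℚ[a_{1,1}, a_{1,2}, a_{2,1}, a_{2,2}]`. -/
abbrev Rring : Type := MvPolynomial (Fin 2 × Fin 2) ℚ

/-- The indeterminate `a_{i,j}`. -/
noncomputable def aa (i j : Fin 2) : Rring := MvPolynomial.X (i, j)

/-- The Jacobian matrix `D(f)` of the `d`-linear map
`f_i = x_i − (t(a_{i,1}x₁ + a_{i,2}x₂))^d`, as a matrix over `R[t, x₁, x₂]`
(variable `0` is `t`, variables `1, 2` are `x₁, x₂`):
`(D f)_{i,k} = δ_{i,k} − t·d·a_{i,k}·(t(a_{i,1}x₁+a_{i,2}x₂))^{d−1}`. -/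
noncomputable def Df (d : ℕ) : Matrix (Fin 2) (Fin 2) (MvPolynomial (Fin 3) Rring) :=
  Matrix.of fun i k =>
    (if i = k then 1 else 0) -
      (d : MvPolynomial (Fin 3) Rring) * X 0 * C (aa i k) *
        (X 0 * (C (aa i 0) * X 1 + C (aa i 1) * X 2)) ^ (d - 1)

/-- The ideal `J_{d,2} ⊆ R` generated by the coefficients of all nonconstant
monomials (in `t, x₁, x₂`) of the Jacobian determinant `det(D f)`. -/
noncomputable def Jideal (d : ℕ) : Ideal Rring :=
  Ideal.span ((fun m => MvPolynomial.coeff m (Df d).det) '' {m | m ≠ 0})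

/-- The exponent vector `t^{e+1} x₁^m x₂^{e-m}`. -/
noncomputable def μμ (e m : ℕ) : Fin 3 →₀ ℕ :=
  Finsupp.single 0 (e+1) + Finsupp.single 1 m + Finsupp.single 2 (e-m)

lemma summand_eq (e k : ℕ) (a b c : Rring) :
    (X 0 * C c * (X 0 ^ e * ((C a * X 1)^k * (C b * X 2)^(e-k) * (e.choose k : MvPolynomial (Fin 3) Rring))) : MvPolynomial (Fin 3) Rring)
    = monomial (Finsupp.single 0 (e+1) + Finsupp.single 1 k + Finsupp.single 2 (e-k))
        (c * (a^k * b^(e-k) * e.choose k)) := by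
  have hca : (C a * X 1 : MvPolynomial (Fin 3) Rring)^k = monomial (Finsupp.single 1 k) (a^k) := by
    rw [mul_pow, X_pow_eq_monomial, ← C_pow, C_mul_monomial, mul_one]
  have hcb : (C b * X 2 : MvPolynomial (Fin 3) Rring)^(e-k) = monomial (Finsupp.single 2 (e-k)) (b^(e-k)) := by
    rw [mul_pow, X_pow_eq_monomial, ← C_pow, C_mul_monomial, mul_one]
  have hch : ((e.choose k : ℕ) : MvPolynomial (Fin 3) Rring) = monomial 0 ((e.choose k : ℕ) : Rring) := by
    simp [monomial_zero']
  have hx0 : (X 0 : MvPolynomial (Fin 3) Rring) = monomial (Finsupp.single 0 1) 1 := rfl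
  have hc : (C c : MvPolynomial (Fin 3) Rring) = monomial 0 c := by simp [monomial_zero']
  rw [hca, hcb, hch, X_pow_eq_monomial, hx0, hc]
  simp only [monomial_mul]
  have hE : (Finsupp.single (0 : Fin 3) 1 + 0 + (Finsupp.single 0 e + ((Finsupp.single 1 k + Finsupp.single 2 (e-k)) + 0)) : Fin 3 →₀ ℕ)
      = Finsupp.single 0 (e+1) + Finsupp.single 1 k + Finsupp.single 2 (e-k) := by
    ext i
    simp only [Finsupp.add_apply, Finsupp.zero_apply, Finsupp.single_apply]
    split_ifs <;> omega
  rw [hE]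
  exact congrArg _ (by ring)

lemma coeffA (e m : ℕ) (hm : m ≤ e) (a b c : Rring) :
    coeff (μμ e m) (X 0 * C c * (X 0 * (C a * X 1 + C b * X 2)) ^ e : MvPolynomial (Fin 3) Rring)
    = c * (a^m * b^(e-m) * e.choose m) := by
  rw [mul_pow, add_pow, Finset.mul_sum, Finset.mul_sum]
  simp only [summand_eq]
  rw [coeff_sum]
  rw [Finset.sum_eq_single m]
  · rw [coeff_monomial, if_pos]; rfl
  · intro k hk hkm
    rw [coeff_monomial, if_neg]
    intro h
    apply hkm
    have h1 := DFunLike.congr_fun h (1 : Fin 3)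
    simpa [μμ, Finsupp.single_apply, Finsupp.add_apply] using h1
  · intro h
    exact absurd (Finset.mem_range.mpr (Nat.lt_succ_of_le hm)) h

lemma coeffB (e m N : ℕ) (hN : e + 1 < N) (q : MvPolynomial (Fin 3) Rring) :
    coeff (μμ e m) (X 0 ^ N * q) = 0 := by
  rw [coeff_mul]
  apply Finset.sum_eq_zero
  intro uv huv
  rw [coeff_X_pow]
  rw [if_neg, zero_mul]
  intro h
  have h0 := DFunLike.congr_fun (Finset.HasAntidiagonal.mem_antidiagonal.mp huv) (0 : Fin 3)
  rw [← h] at h0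
  simp [μμ, Finsupp.single_apply, Finsupp.add_apply] at h0
  omega

lemma coeffT (e m n : ℕ) (hm : m ≤ e) (a b c : Rring) :
    coeff (μμ e m) ((n : MvPolynomial (Fin 3) Rring) * X 0 * C c * (X 0 * (C a * X 1 + C b * X 2)) ^ e)
    = (n : Rring) * (c * (a^m * b^(e-m) * e.choose m)) := by
  have h : ((n : MvPolynomial (Fin 3) Rring) * X 0 * C c * (X 0 * (C a * X 1 + C b * X 2)) ^ e)
      = C ((n : Rring)) * (X 0 * C c * (X 0 * (C a * X 1 + C b * X 2)) ^ e) := by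
    rw [map_natCast (C : Rring →+* MvPolynomial (Fin 3) Rring)]; ring
  rw [h, coeff_C_mul, coeffA e m hm]

lemma coeffP2 (e m n : ℕ) (a b a' b' c c' : Rring) :
    coeff (μμ e m) (((n : MvPolynomial (Fin 3) Rring) * X 0 * C c * (X 0 * (C a * X 1 + C b * X 2)) ^ e)
      * ((n : MvPolynomial (Fin 3) Rring) * X 0 * C c' * (X 0 * (C a' * X 1 + C b' * X 2)) ^ e)) = 0 := by
  have h : ((n : MvPolynomial (Fin 3) Rring) * X 0 * C c * (X 0 * (C a * X 1 + C b * X 2)) ^ e)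
      * ((n : MvPolynomial (Fin 3) Rring) * X 0 * C c' * (X 0 * (C a' * X 1 + C b' * X 2)) ^ e)
      = X 0 ^ (2*e+2) * ((n : MvPolynomial (Fin 3) Rring)^2 * C c * C c'
          * (C a * X 1 + C b * X 2) ^ e * (C a' * X 1 + C b' * X 2) ^ e) := by
    rw [mul_pow, mul_pow]; ring
  rw [h, coeffB e m _ (by omega)]

lemma coeff_det (e m : ℕ) (hm : m ≤ e) :
    coeff (μμ e m) ((Df (e+1)).det)
    = -((((e+1) * e.choose m : ℕ)) : Rring) *
        (aa 0 0 ^ (m+1) * aa 0 1 ^ (e-m) + aa 1 0 ^ m * aa 1 1 ^ (e-m+1)) := by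
  have hdet : (Df (e+1)).det =
      1 - (((e+1 : ℕ) : MvPolynomial (Fin 3) Rring) * X 0 * C (aa 0 0) * (X 0 * (C (aa 0 0) * X 1 + C (aa 0 1) * X 2)) ^ e)
        - (((e+1 : ℕ) : MvPolynomial (Fin 3) Rring) * X 0 * C (aa 1 1) * (X 0 * (C (aa 1 0) * X 1 + C (aa 1 1) * X 2)) ^ e)
        + ((((e+1 : ℕ) : MvPolynomial (Fin 3) Rring) * X 0 * C (aa 0 0) * (X 0 * (C (aa 0 0) * X 1 + C (aa 0 1) * X 2)) ^ e)
            * (((e+1 : ℕ) : MvPolynomial (Fin 3) Rring) * X 0 * C (aa 1 1) * (X 0 * (C (aa 1 0) * X 1 + C (aa 1 1) * X 2)) ^ e)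
          - (((e+1 : ℕ) : MvPolynomial (Fin 3) Rring) * X 0 * C (aa 0 1) * (X 0 * (C (aa 0 0) * X 1 + C (aa 0 1) * X 2)) ^ e)
            * (((e+1 : ℕ) : MvPolynomial (Fin 3) Rring) * X 0 * C (aa 1 0) * (X 0 * (C (aa 1 0) * X 1 + C (aa 1 1) * X 2)) ^ e)) := by
    rw [Matrix.det_fin_two]
    simp only [Df, Matrix.of_apply, Nat.add_sub_cancel]
    norm_num
    ring
  rw [hdet]
  rw [coeff_add, coeff_sub, coeff_sub, coeff_sub, coeff_one,
    coeffT e m (e+1) hm, coeffT e m (e+1) hm, coeffP2, coeffP2]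
  rw [if_neg]
  · push_cast; ring
  · intro h
    have h0 := DFunLike.congr_fun h (0 : Fin 3)
    simp [μμ, Finsupp.single_apply, Finsupp.add_apply] at h0

/-- (Case `u₀ = 1`, `u₂ = 2` of Theorem 2, eq. (2)): for any `(d−1)`-tuple `β` with
entries in `{1,2}` and any `0 ≤ m ≤ d−1`, the element
`(a_{1,1}a_{1,2} Π_j a_{1,β(j)}) a_{1,1}^m a_{1,2}^{d−1−m}
 + (a_{1,2}a_{2,2} Π_j a_{1,β(j)}) a_{2,1}^m a_{2,2}^{d−1−m}` lies in `J_{d,2}`. -/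
theorem fern_element_one_two_mem (d : ℕ) (hd : 1 ≤ d)
    (β : Fin (d - 1) → Fin 2) (m : ℕ) (hm : m ≤ d - 1) :
    (aa 0 0 * aa 0 1 * ∏ j, aa 0 (β j)) * aa 0 0 ^ m * aa 0 1 ^ (d - 1 - m) +
      (aa 0 1 * aa 1 1 * ∏ j, aa 0 (β j)) * aa 1 0 ^ m * aa 1 1 ^ (d - 1 - m) ∈
      Jideal d := by
  have hμ : μμ (d-1) m ≠ 0 := by
    intro h
    have h0 := DFunLike.congr_fun h (0 : Fin 3)
    simp [μμ, Finsupp.single_apply, Finsupp.add_apply] at h0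
  have hmem : coeff (μμ (d-1) m) ((Df d).det) ∈ Jideal d :=
    Ideal.subset_span ⟨μμ (d-1) m, hμ, rfl⟩
  have hDf : Df d = Df ((d-1)+1) := by rw [show d - 1 + 1 = d from by omega]
  rw [hDf, coeff_det (d-1) m hm] at hmem
  set g : Rring := aa 0 0 ^ (m+1) * aa 0 1 ^ ((d-1)-m) + aa 1 0 ^ m * aa 1 1 ^ ((d-1)-m+1) with hgdef
  have hc0 : ((((d-1)+1) * (d-1).choose m : ℕ) : ℚ) ≠ 0 := by
    have := Nat.choose_pos hm
    positivity
  have hg : g ∈ Jideal d := by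
    have hcast : (((((d-1)+1) * (d-1).choose m : ℕ)) : Rring)
        = C (((((d-1)+1) * (d-1).choose m : ℕ)) : ℚ) :=
      (map_natCast (C : ℚ →+* Rring) _).symm
    have heq : g = C (-(1/((((d-1)+1) * (d-1).choose m : ℕ) : ℚ))) *
        (-(((((d-1)+1) * (d-1).choose m : ℕ)) : Rring) * g) := by
      rw [hcast, ← C_neg, ← mul_assoc, ← C_mul]
      rw [show (-(1 / ((((d-1)+1) * (d-1).choose m : ℕ) : ℚ)) *
          -((((d-1)+1) * (d-1).choose m : ℕ) : ℚ)) = 1 from by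
        have hch : (((d-1).choose m : ℕ) : ℚ) ≠ 0 := Nat.cast_ne_zero.mpr (Nat.choose_pos hm).ne'
        have hdq : ((d : ℕ) : ℚ) ≠ 0 := Nat.cast_ne_zero.mpr (by omega)
        field_simp]
      rw [C_1, one_mul]
    rw [heq]
    exact Ideal.mul_mem_left _ _ hmem
  have hfactor :
      (aa 0 0 * aa 0 1 * ∏ j, aa 0 (β j)) * aa 0 0 ^ m * aa 0 1 ^ (d - 1 - m) +
        (aa 0 1 * aa 1 1 * ∏ j, aa 0 (β j)) * aa 1 0 ^ m * aa 1 1 ^ (d - 1 - m)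
      = (aa 0 1 * ∏ j, aa 0 (β j)) * g := by
    rw [hgdef]; ring
  rw [hfactor]
  exact Ideal.mul_mem_left _ _ hg
end

section
/- With n = 2 and d ≥ 1, for ALL u₀, u₂ ∈ {1,2} and all 2-level labelings ν, the element z(fern_{d,2},(u₀,u₂;ν)) = Σ_{w∈{1,2}} a_{u₀,w} a_{w,u₂} Π_{j=1}^{d−1} a_{u₀,ν(1,j)} a_{w,ν(2,j)} belongs to the ideal J_{d,2}. -/
open Finset MvPolynomial

/-! ### Auxiliary lemmas -/

lemma fin2_cases : ∀ i : Fin 2, i = 0 ∨ i = 1 := by decide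

lemma coeff_mem (n : ℕ) (m : Fin 3 →₀ ℕ) (hm : m ≠ 0) :
    coeff m (Df (n+1)).det ∈ Jideal (n+1) :=
  Ideal.subset_span ⟨m, hm, rfl⟩

lemma scaled_mem {I : Ideal Rring} {x : Rring} (N : ℕ) (hN : N ≠ 0) (h : (N : Rring) * x ∈ I) :
    x ∈ I := by
  have h1 : (C ((N:ℚ)⁻¹) : Rring) * ((N:Rring) * x) ∈ I := Ideal.mul_mem_left _ _ h
  rwa [show (C ((N:ℚ)⁻¹) : Rring) * ((N:Rring) * x) = x from by
    rw [← map_natCast (C : ℚ →+* Rring) N, ← mul_assoc, ← map_mul,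
      inv_mul_cancel₀ (by exact_mod_cast hN), map_one, one_mul]] at h1

lemma expandL (a b : Rring) (m : ℕ) :
    ((C a * X 1 + C b * X 2 : MvPolynomial (Fin 3) Rring)) ^ m =
      ∑ k ∈ Finset.range (m+1),
        monomial (Finsupp.single 1 k + Finsupp.single 2 (m-k))
          (a^k * b^(m-k) * (m.choose k : Rring)) := by
  rw [add_pow]
  refine Finset.sum_congr rfl fun k hk => ?_
  rw [mul_pow, mul_pow, ← map_pow, ← map_pow, X_pow_eq_monomial, X_pow_eq_monomial,
    C_mul_monomial, C_mul_monomial, monomial_mul,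
    ← map_natCast (C : Rring →+* MvPolynomial (Fin 3) Rring) (m.choose k),
    mul_comm _ (C ((m.choose k : Rring))), C_mul_monomial]
  congr 1
  ring

lemma coeff_L_pow (a b : Rring) (m j q : ℕ) (h : j + q = m) :
    coeff (Finsupp.single 1 j + Finsupp.single 2 q)
      ((C a * X 1 + C b * X 2 : MvPolynomial (Fin 3) Rring) ^ m) =
      (m.choose j : Rring) * (a ^ j * b ^ q) := by
  rw [expandL, coeff_sum]
  have step : ∀ k ∈ Finset.range (m+1),
      coeff (Finsupp.single (1 : Fin 3) j + Finsupp.single (2 : Fin 3) q)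
        ((monomial (Finsupp.single (1 : Fin 3) k + Finsupp.single (2 : Fin 3) (m-k)))
          (a^k * b^(m-k) * (m.choose k : Rring)))
      = if k = j then (m.choose j : Rring) * (a ^ j * b ^ q) else 0 := by
    intro k hk
    simp only [Finset.mem_range] at hk
    rw [coeff_monomial]
    by_cases hkj : k = j
    · subst hkj
      have hq : m - k = q := by omega
      rw [hq, if_pos rfl, if_pos rfl]
      ring
    · rw [if_neg, if_neg hkj]
      intro hcon
      apply hkj
      have := DFunLike.congr_fun hcon (1 : Fin 3)
      simpa [Finsupp.single_apply] using this
  rw [Finset.sum_congr rfl step, Finset.sum_ite_eq' (Finset.range (m+1)) j]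
  rw [if_pos (Finset.mem_range.mpr (by omega))]

lemma coeff_L_pow_zero (a b : Rring) (m : ℕ) (m' : Fin 3 →₀ ℕ) (h : m' 0 ≠ 0) :
    coeff m' ((C a * X 1 + C b * X 2 : MvPolynomial (Fin 3) Rring) ^ m) = 0 := by
  rw [expandL, coeff_sum]
  refine Finset.sum_eq_zero fun k hk => ?_
  rw [coeff_monomial, if_neg]
  intro hcon
  apply h
  have := DFunLike.congr_fun hcon (0 : Fin 3)
  simpa [Finsupp.single_apply] using this.symm

lemma coeff_L_mul (n : ℕ) (a b a' b' : Rring) :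
    coeff (Finsupp.single 1 n + Finsupp.single 2 n)
      ((C a * X 1 + C b * X 2 : MvPolynomial (Fin 3) Rring) ^ n *
        (C a' * X 1 + C b' * X 2) ^ n) =
      ∑ k ∈ Finset.range (n+1),
        ((n.choose k ^ 2 : ℕ) : Rring) * (a^k * b^(n-k) * a'^(n-k) * b'^k) := by
  rw [expandL a b n, expandL a' b' n, Finset.sum_mul_sum]
  simp only [coeff_sum, monomial_mul, coeff_monomial]
  refine Finset.sum_congr rfl fun k hk => ?_
  simp only [Finset.mem_range] at hk
  have step : ∀ l ∈ Finset.range (n+1),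
      (if (Finsupp.single (1 : Fin 3) k + Finsupp.single (2 : Fin 3) (n-k) +
            (Finsupp.single (1 : Fin 3) l + Finsupp.single (2 : Fin 3) (n-l))) =
          (Finsupp.single (1 : Fin 3) n + Finsupp.single (2 : Fin 3) n)
        then (a^k * b^(n-k) * (n.choose k : Rring)) * (a'^l * b'^(n-l) * (n.choose l : Rring))
        else 0)
      = if l = n - k
        then (a^k * b^(n-k) * (n.choose k : Rring)) * (a'^l * b'^(n-l) * (n.choose l : Rring))
        else 0 := by
    intro l hl
    simp only [Finset.mem_range] at hl
    by_cases hcase : l = n - k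
    · rw [if_pos hcase, if_pos]
      subst hcase
      ext i
      fin_cases i <;> simp [Finsupp.single_apply] <;> omega
    · rw [if_neg hcase, if_neg]
      intro hcon
      apply hcase
      have := DFunLike.congr_fun hcon (1 : Fin 3)
      simp [Finsupp.single_apply] at this
      omega
  rw [Finset.sum_congr rfl step, Finset.sum_ite_eq' (Finset.range (n+1)) (n-k)]
  rw [if_pos (Finset.mem_range.mpr (by omega))]
  have h1 : n - (n - k) = k := by omega
  have h2 : n.choose (n - k) = n.choose k := Nat.choose_symm (by omega)
  rw [h1, h2]
  push_cast
  ring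

lemma detD (n : ℕ) :
    (Df (n+1)).det =
      1 - X 0 ^ (n+1) *
        (((n : MvPolynomial (Fin 3) Rring) + 1) *
          (C (aa 0 0) * (C (aa 0 0) * X 1 + C (aa 0 1) * X 2) ^ n +
           C (aa 1 1) * (C (aa 1 0) * X 1 + C (aa 1 1) * X 2) ^ n))
      + X 0 ^ (n+1) * (X 0 ^ (n+1) *
        (((n : MvPolynomial (Fin 3) Rring) + 1) ^ 2 *
          (C (aa 0 0 * aa 1 1 - aa 0 1 * aa 1 0) *
            ((C (aa 0 0) * X 1 + C (aa 0 1) * X 2) ^ n *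
             (C (aa 1 0) * X 1 + C (aa 1 1) * X 2) ^ n)))) := by
  rw [Matrix.det_fin_two]
  simp only [Df, Matrix.of_apply, Nat.add_sub_cancel, map_sub, map_mul, mul_pow,
    if_pos, if_neg, one_ne_zero, Fin.zero_eq_one_iff, Fin.one_eq_zero_iff, OfNat.ofNat_ne_one,
    Nat.cast_ofNat, reduceIte]
  push_cast
  ring

/-- The generators coming from the `t^d` coefficients of the determinant. -/
lemma G_mem (n j q : ℕ) (h : j + q = n) :
    aa 0 0 ^ (j+1) * aa 0 1 ^ q + aa 1 0 ^ j * aa 1 1 ^ (q+1) ∈ Jideal (n+1) := by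
  have hc1 : (C ((n:Rring) + 1) : MvPolynomial (Fin 3) Rring)
      = ((n : MvPolynomial (Fin 3) Rring) + 1) := by
    rw [map_add, map_natCast, map_one]
  have hEne : (Finsupp.single (0:Fin 3) (n+1) +
      (Finsupp.single (1:Fin 3) j + Finsupp.single (2:Fin 3) q)) ≠ 0 := by
    intro hcon
    have := DFunLike.congr_fun hcon (0 : Fin 3)
    simp [Finsupp.single_apply] at this
  have hnle : ¬ (Finsupp.single (0:Fin 3) (n+1) ≤
      Finsupp.single (1:Fin 3) j + Finsupp.single (2:Fin 3) q) := by
    rw [Finsupp.single_le_iff]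
    simp [Finsupp.single_apply]
  have hco : coeff (Finsupp.single (0:Fin 3) (n+1) +
        (Finsupp.single (1:Fin 3) j + Finsupp.single (2:Fin 3) q)) (Df (n+1)).det
      = -((((n+1) * n.choose j : ℕ)) : Rring) *
        (aa 0 0 ^ (j+1) * aa 0 1 ^ q + aa 1 0 ^ j * aa 1 1 ^ (q+1)) := by
    rw [detD n]
    simp only [X_pow_eq_monomial]
    rw [coeff_add, coeff_sub, coeff_one, if_neg (fun hcon => hEne hcon.symm),
      coeff_monomial_mul, coeff_monomial_mul, coeff_monomial_mul', if_neg hnle,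
      ← hc1, coeff_C_mul, coeff_add, coeff_C_mul, coeff_C_mul,
      coeff_L_pow _ _ _ _ _ h, coeff_L_pow _ _ _ _ _ h]
    push_cast
    ring
  have hmem := coeff_mem n _ hEne
  rw [hco] at hmem
  apply scaled_mem ((n+1) * n.choose j)
    (Nat.mul_ne_zero (by omega) (Nat.choose_pos (by omega)).ne')
  have heq : ((((n+1) * n.choose j : ℕ)) : Rring) *
        (aa 0 0 ^ (j+1) * aa 0 1 ^ q + aa 1 0 ^ j * aa 1 1 ^ (q+1))
      = -(-((((n+1) * n.choose j : ℕ)) : Rring) *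
        (aa 0 0 ^ (j+1) * aa 0 1 ^ q + aa 1 0 ^ j * aa 1 1 ^ (q+1))) := by ring
  rw [heq]
  exact neg_mem hmem

/-- The generator coming from the `t^{2d}` coefficient at `x₁^{d-1} x₂^{d-1}`. -/
lemma H_mem (n : ℕ) :
    (aa 0 0 * aa 1 1 - aa 0 1 * aa 1 0) *
      (∑ k ∈ Finset.range (n+1),
        ((n.choose k ^ 2 : ℕ) : Rring) *
          (aa 0 0^k * aa 0 1^(n-k) * aa 1 0^(n-k) * aa 1 1^k)) ∈ Jideal (n+1) := by
  have hc1 : (C ((n:Rring) + 1) : MvPolynomial (Fin 3) Rring)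
      = ((n : MvPolynomial (Fin 3) Rring) + 1) := by
    rw [map_add, map_natCast, map_one]
  have hc2 : (C (((n:Rring) + 1)^2) : MvPolynomial (Fin 3) Rring)
      = ((n : MvPolynomial (Fin 3) Rring) + 1)^2 := by
    rw [map_pow, map_add, map_natCast, map_one]
  have hEne : (Finsupp.single (0:Fin 3) (n+1) +
      (Finsupp.single (0:Fin 3) (n+1) +
        (Finsupp.single (1:Fin 3) n + Finsupp.single (2:Fin 3) n))) ≠ 0 := by
    intro hcon
    have := DFunLike.congr_fun hcon (0 : Fin 3)
    simp [Finsupp.single_apply] at this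
  have hco : coeff (Finsupp.single (0:Fin 3) (n+1) +
        (Finsupp.single (0:Fin 3) (n+1) +
          (Finsupp.single (1:Fin 3) n + Finsupp.single (2:Fin 3) n))) (Df (n+1)).det
      = (((n+1)^2 : ℕ) : Rring) *
        ((aa 0 0 * aa 1 1 - aa 0 1 * aa 1 0) *
          (∑ k ∈ Finset.range (n+1),
            ((n.choose k ^ 2 : ℕ) : Rring) *
              (aa 0 0^k * aa 0 1^(n-k) * aa 1 0^(n-k) * aa 1 1^k))) := by
    rw [detD n]
    simp only [X_pow_eq_monomial]
    rw [coeff_add, coeff_sub, coeff_one, if_neg (fun hcon => hEne hcon.symm),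
      coeff_monomial_mul, coeff_monomial_mul, coeff_monomial_mul,
      ← hc2, ← hc1, coeff_C_mul, coeff_add, coeff_C_mul, coeff_C_mul,
      coeff_L_pow_zero _ _ _ _ (by simp [Finsupp.single_apply]),
      coeff_L_pow_zero _ _ _ _ (by simp [Finsupp.single_apply]),
      coeff_C_mul, coeff_C_mul, coeff_L_mul]
    push_cast
    ring
  have hmem := coeff_mem n _ hEne
  rw [hco] at hmem
  exact scaled_mem ((n+1)^2) (by positivity) hmem

lemma phi_pos (n j q k l : ℕ) (h1 : j + 1 + q = n) (h2 : k + l = n) :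
    (aa 0 0 * aa 1 1 - aa 0 1 * aa 1 0) *
      (aa 0 0^(j+1) * aa 0 1^q * aa 1 0^k * aa 1 1^l) ∈ Jideal (n+1) := by
  have hG1 := G_mem n (j+1) q h1
  have hG2 := G_mem n j (q+1) (by omega)
  have heq : (aa 0 0 * aa 1 1 - aa 0 1 * aa 1 0) *
      (aa 0 0^(j+1) * aa 0 1^q * aa 1 0^k * aa 1 1^l)
      = (aa 0 0 ^ (j+1+1) * aa 0 1 ^ q + aa 1 0 ^ (j+1) * aa 1 1 ^ (q+1)) *
          (aa 1 0^k * aa 1 1^(l+1))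
        - (aa 0 0 ^ (j+1) * aa 0 1 ^ (q+1) + aa 1 0 ^ j * aa 1 1 ^ (q+1+1)) *
          (aa 1 0^(k+1) * aa 1 1^l) := by ring
  rw [heq]
  exact sub_mem (Ideal.mul_mem_right _ _ hG1) (Ideal.mul_mem_right _ _ hG2)

lemma phi00 (n : ℕ) :
    (aa 0 0 * aa 1 1 - aa 0 1 * aa 1 0) * (aa 0 1 ^ n * aa 1 0 ^ n) ∈ Jideal (n+1) := by
  have hH := H_mem n
  rw [Finset.sum_range_succ'] at hH
  have hsum : ∀ k ∈ Finset.range n,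
      (aa 0 0 * aa 1 1 - aa 0 1 * aa 1 0) *
        (((n.choose (k+1) ^ 2 : ℕ) : Rring) *
          (aa 0 0^(k+1) * aa 0 1^(n-(k+1)) * aa 1 0^(n-(k+1)) * aa 1 1^(k+1))) ∈
        Jideal (n+1) := by
    intro k hk
    simp only [Finset.mem_range] at hk
    have hp := phi_pos n k (n-(k+1)) (n-(k+1)) (k+1) (by omega) (by omega)
    have heq : (aa 0 0 * aa 1 1 - aa 0 1 * aa 1 0) *
        (((n.choose (k+1) ^ 2 : ℕ) : Rring) *
          (aa 0 0^(k+1) * aa 0 1^(n-(k+1)) * aa 1 0^(n-(k+1)) * aa 1 1^(k+1)))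
        = ((n.choose (k+1) ^ 2 : ℕ) : Rring) *
          ((aa 0 0 * aa 1 1 - aa 0 1 * aa 1 0) *
            (aa 0 0^(k+1) * aa 0 1^(n-(k+1)) * aa 1 0^(n-(k+1)) * aa 1 1^(k+1))) := by
      ring
    rw [heq]
    exact Ideal.mul_mem_left _ _ hp
  have hS := Ideal.sum_mem _ hsum
  have heqG : (aa 0 0 * aa 1 1 - aa 0 1 * aa 1 0) * (aa 0 1 ^ n * aa 1 0 ^ n)
      = (aa 0 0 * aa 1 1 - aa 0 1 * aa 1 0) *
          ((∑ k ∈ Finset.range n,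
            ((n.choose (k+1) ^ 2 : ℕ) : Rring) *
              (aa 0 0^(k+1) * aa 0 1^(n-(k+1)) * aa 1 0^(n-(k+1)) * aa 1 1^(k+1)))
            + ((n.choose 0 ^ 2 : ℕ) : Rring) *
              (aa 0 0^0 * aa 0 1^(n-0) * aa 1 0^(n-0) * aa 1 1^0))
        - ∑ k ∈ Finset.range n,
            (aa 0 0 * aa 1 1 - aa 0 1 * aa 1 0) *
              (((n.choose (k+1) ^ 2 : ℕ) : Rring) *
                (aa 0 0^(k+1) * aa 0 1^(n-(k+1)) * aa 1 0^(n-(k+1)) * aa 1 1^(k+1))) := by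
    rw [mul_add, Finset.mul_sum]
    simp only [Nat.sub_zero, Nat.choose_zero_right, one_pow, Nat.cast_one, pow_zero]
    ring
  rw [heqG]
  exact sub_mem hH hS

lemma phi_mem (n j q k l : ℕ) (h1 : j + q = n) (h2 : k + l = n) :
    (aa 0 0 * aa 1 1 - aa 0 1 * aa 1 0) *
      (aa 0 0^j * aa 0 1^q * aa 1 0^k * aa 1 1^l) ∈ Jideal (n+1) := by
  rcases j with _ | j
  · rcases l with _ | l
    · have hq : q = n := by omega
      have hk : k = n := by omega
      rw [hq, hk]
      have heq : (aa 0 0 * aa 1 1 - aa 0 1 * aa 1 0) *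
          (aa 0 0^0 * aa 0 1^n * aa 1 0^n * aa 1 1^0)
          = (aa 0 0 * aa 1 1 - aa 0 1 * aa 1 0) * (aa 0 1 ^ n * aa 1 0 ^ n) := by ring
      rw [heq]; exact phi00 n
    · have hG1 := G_mem n k (l+1) h2
      have hG2 := G_mem n (k+1) l (by omega)
      have heq : (aa 0 0 * aa 1 1 - aa 0 1 * aa 1 0) *
          (aa 0 0^0 * aa 0 1^q * aa 1 0^k * aa 1 1^(l+1))
          = (aa 0 0 ^ (k+1) * aa 0 1 ^ (l+1) + aa 1 0 ^ k * aa 1 1 ^ (l+1+1)) *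
              (aa 0 0 * aa 0 1^q)
            - (aa 0 0 ^ (k+1+1) * aa 0 1 ^ l + aa 1 0 ^ (k+1) * aa 1 1 ^ (l+1)) *
              (aa 0 1^(q+1)) := by ring
      rw [heq]
      exact sub_mem (Ideal.mul_mem_right _ _ hG1) (Ideal.mul_mem_right _ _ hG2)
  · exact phi_pos n j q k l (by omega) h2

lemma FFg (n : ℕ) : ∀ g p Q, p + g + Q = n + 1 →
    aa 0 0^p * aa 0 1^(Q+g) * aa 1 0^(p+g) * aa 1 1^Q
      - aa 0 0^(p+g) * aa 0 1^Q * aa 1 0^p * aa 1 1^(Q+g) ∈ Jideal (n+1) := by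
  intro g
  induction g using Nat.strong_induction_on with
  | _ g IH =>
    match g with
    | 0 =>
      intro p Q h
      have heq : aa 0 0^p * aa 0 1^(Q+0) * aa 1 0^(p+0) * aa 1 1^Q
          - aa 0 0^(p+0) * aa 0 1^Q * aa 1 0^p * aa 1 1^(Q+0) = 0 := by ring
      rw [heq]; exact zero_mem _
    | 1 =>
      intro p Q h
      have hφ := phi_mem n p Q p Q (by omega) (by omega)
      have heq : aa 0 0^p * aa 0 1^(Q+1) * aa 1 0^(p+1) * aa 1 1^Q
          - aa 0 0^(p+1) * aa 0 1^Q * aa 1 0^p * aa 1 1^(Q+1)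
          = -((aa 0 0 * aa 1 1 - aa 0 1 * aa 1 0) *
              (aa 0 0^p * aa 0 1^Q * aa 1 0^p * aa 1 1^Q)) := by ring
      rw [heq]; exact neg_mem hφ
    | (g+2) =>
      intro p Q h
      have h1 := IH g (by omega) (p+1) (Q+1) (by omega)
      have hφ1 := phi_mem n p (Q+g+1) (p+g+1) Q (by omega) (by omega)
      have hφ2 := phi_mem n (p+g+1) Q p (Q+g+1) (by omega) (by omega)
      have heq : aa 0 0^p * aa 0 1^(Q+(g+2)) * aa 1 0^(p+(g+2)) * aa 1 1^Q
          - aa 0 0^(p+(g+2)) * aa 0 1^Q * aa 1 0^p * aa 1 1^(Q+(g+2))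
          = (aa 0 0^(p+1) * aa 0 1^((Q+1)+g) * aa 1 0^((p+1)+g) * aa 1 1^(Q+1)
              - aa 0 0^((p+1)+g) * aa 0 1^(Q+1) * aa 1 0^(p+1) * aa 1 1^((Q+1)+g))
            + (-((aa 0 0 * aa 1 1 - aa 0 1 * aa 1 0) *
                (aa 0 0^p * aa 0 1^(Q+g+1) * aa 1 0^(p+g+1) * aa 1 1^Q)))
            + (-((aa 0 0 * aa 1 1 - aa 0 1 * aa 1 0) *
                (aa 0 0^(p+g+1) * aa 0 1^Q * aa 1 0^p * aa 1 1^(Q+g+1)))) := by ring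
      rw [heq]
      exact add_mem (add_mem h1 (neg_mem hφ1)) (neg_mem hφ2)

lemma FF_mem (n p q P Q : ℕ) (h1 : p + q = n + 1) (h2 : P + Q = n + 1) :
    aa 0 0^p * aa 0 1^q * aa 1 0^P * aa 1 1^Q
      - aa 0 0^P * aa 0 1^Q * aa 1 0^p * aa 1 1^q ∈ Jideal (n+1) := by
  rcases le_total p P with hle | hle
  · obtain ⟨g, rfl⟩ : ∃ g, P = p + g := ⟨P - p, by omega⟩
    have hq : q = Q + g := by omega
    subst hq
    exact FFg n g p Q (by omega)
  · obtain ⟨g, rfl⟩ : ∃ g, p = P + g := ⟨p - P, by omega⟩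
    have hQ : Q = q + g := by omega
    subst hQ
    have := FFg n g P q (by omega)
    have heq : aa 0 0^(P+g) * aa 0 1^q * aa 1 0^P * aa 1 1^(q+g)
        - aa 0 0^P * aa 0 1^(q+g) * aa 1 0^(P+g) * aa 1 1^q
        = -(aa 0 0^P * aa 0 1^(q+g) * aa 1 0^(P+g) * aa 1 1^q
            - aa 0 0^(P+g) * aa 0 1^q * aa 1 0^P * aa 1 1^(q+g)) := by ring
    rw [heq]
    exact neg_mem this

lemma key_mem (n : ℕ) (u₀ : Fin 2) (s s' P Q : ℕ) (hs : s + s' = n) (hPQ : P + Q = n + 1) :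
    aa u₀ 0^s * aa u₀ 1^s' *
      (aa u₀ 0 * (aa 0 0^P * aa 0 1^Q) + aa u₀ 1 * (aa 1 0^P * aa 1 1^Q)) ∈ Jideal (n+1) := by
  rcases fin2_cases u₀ with rfl | rfl
  · have hG := G_mem n s s' hs
    have hFF := FF_mem n s (s'+1) P Q (by omega) hPQ
    have heq : aa 0 0^s * aa 0 1^s' *
        (aa 0 0 * (aa 0 0^P * aa 0 1^Q) + aa 0 1 * (aa 1 0^P * aa 1 1^Q))
        = (aa 0 0 ^ (s+1) * aa 0 1 ^ s' + aa 1 0 ^ s * aa 1 1 ^ (s'+1)) *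
            (aa 0 0^P * aa 0 1^Q)
          + (aa 0 0^s * aa 0 1^(s'+1) * aa 1 0^P * aa 1 1^Q
              - aa 0 0^P * aa 0 1^Q * aa 1 0^s * aa 1 1^(s'+1)) := by ring
    rw [heq]
    exact add_mem (Ideal.mul_mem_right _ _ hG) hFF
  · have hG := G_mem n s s' hs
    have hFF := FF_mem n (s+1) s' P Q (by omega) hPQ
    have heq : aa 1 0^s * aa 1 1^s' *
        (aa 1 0 * (aa 0 0^P * aa 0 1^Q) + aa 1 1 * (aa 1 0^P * aa 1 1^Q))
        = (aa 0 0 ^ (s+1) * aa 0 1 ^ s' + aa 1 0 ^ s * aa 1 1 ^ (s'+1)) *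
            (aa 1 0^P * aa 1 1^Q)
          - (aa 0 0^(s+1) * aa 0 1^s' * aa 1 0^P * aa 1 1^Q
              - aa 0 0^P * aa 0 1^Q * aa 1 0^(s+1) * aa 1 1^s') := by ring
    rw [heq]
    exact sub_mem (Ideal.mul_mem_right _ _ hG) hFF

lemma prod_aa_eq (m : ℕ) (μ : Fin m → Fin 2) :
    ∃ p q, p + q = m ∧ ∀ w : Fin 2, (∏ j, aa w (μ j)) = aa w 0 ^ p * aa w 1 ^ q := by
  induction m with
  | zero => exact ⟨0, 0, rfl, fun w => by simp⟩
  | succ m ih =>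
    obtain ⟨p, q, hpq, hw⟩ := ih (fun j => μ j.succ)
    rcases fin2_cases (μ 0) with hv | hv
    · exact ⟨p+1, q, by omega, fun w => by
        rw [Fin.prod_univ_succ, hv, hw w]; ring⟩
    · exact ⟨p, q+1, by omega, fun w => by
        rw [Fin.prod_univ_succ, hv, hw w]; ring⟩

/-- (Lemma 3 of the paper.)  For all `u₀, u₂ ∈ {1,2}` and all 2-level labelings `ν`,
the fern element
`z(fern_{d,2},(u₀,u₂;ν)) = Σ_w a_{u₀,w} a_{w,u₂} Π_j a_{u₀,ν(1,j)} a_{w,ν(2,j)}`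
belongs to the ideal `J_{d,2}`. -/
theorem fern_element_mem (d : ℕ) (hd : 1 ≤ d)
    (u₀ u₂ : Fin 2) (ν : Fin 2 → Fin (d - 1) → Fin 2) :
    (∑ w : Fin 2, aa u₀ w * aa w u₂ * ∏ j, aa u₀ (ν 0 j) * aa w (ν 1 j)) ∈
      Jideal d := by
  obtain ⟨n, rfl⟩ : ∃ n, d = n + 1 := ⟨d - 1, by omega⟩
  obtain ⟨s, s', hs, hS⟩ := prod_aa_eq _ (ν 0)
  obtain ⟨p, p', hp, hP⟩ := prod_aa_eq _ (ν 1)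
  have hs' : s + s' = n := by omega
  have hp' : p + p' = n := by omega
  rw [Fin.sum_univ_two, Finset.prod_mul_distrib, Finset.prod_mul_distrib,
    hS u₀, hP 0, hP 1]
  rcases fin2_cases u₂ with rfl | rfl
  · have := key_mem n u₀ s s' (p+1) p' hs' (by omega)
    have heq : aa u₀ 0 * aa 0 0 * (aa u₀ 0 ^ s * aa u₀ 1 ^ s' * (aa 0 0 ^ p * aa 0 1 ^ p'))
        + aa u₀ 1 * aa 1 0 * (aa u₀ 0 ^ s * aa u₀ 1 ^ s' * (aa 1 0 ^ p * aa 1 1 ^ p'))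
        = aa u₀ 0^s * aa u₀ 1^s' *
          (aa u₀ 0 * (aa 0 0^(p+1) * aa 0 1^p') + aa u₀ 1 * (aa 1 0^(p+1) * aa 1 1^p')) := by
      ring
    rw [heq]
    exact this
  · have := key_mem n u₀ s s' p (p'+1) hs' (by omega)
    have heq : aa u₀ 0 * aa 0 1 * (aa u₀ 0 ^ s * aa u₀ 1 ^ s' * (aa 0 0 ^ p * aa 0 1 ^ p'))
        + aa u₀ 1 * aa 1 1 * (aa u₀ 0 ^ s * aa u₀ 1 ^ s' * (aa 1 0 ^ p * aa 1 1 ^ p'))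
        = aa u₀ 0^s * aa u₀ 1^s' *
          (aa u₀ 0 * (aa 0 0^p * aa 0 1^(p'+1)) + aa u₀ 1 * (aa 1 0^p * aa 1 1^(p'+1))) := by
      ring
    rw [heq]
    exact this
end

section
/- Let d ≥ 2 and n = 2, and let f(x₁,x₂) = (x₁ − (a_{1,1}x₁+a_{1,2}x₂)^d, x₂ − (a_{2,1}x₁+a_{2,2}x₂)^d) with coefficients in a commutative ℚ-algebra. If the Jacobian determinant of f is identically 1 (i.e., all generators of J_{d,2} vanish), then the formal power series inverse g of f (with g(0)=0, f(g(x))=x) is a polynomial map. -/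
open Finset MvPolynomial

private lemma natCast_mul_cancel {R : Type*} [CommRing R] [Algebra ℚ R] {n : ℕ} (hn : n ≠ 0)
    {x : R} (h : (n : R) * x = 0) : x = 0 := by
  have h1 : algebraMap ℚ R ((n : ℚ)⁻¹) * ((n : R) * x) = 0 := by rw [h, mul_zero]
  rwa [← map_natCast (algebraMap ℚ R) n, ← mul_assoc, ← map_mul,
    inv_mul_cancel₀ (Nat.cast_ne_zero.mpr hn), map_one, one_mul] at h1

private lemma main_aux {A : Type*} [CommRing A] [Algebra ℚ A] (c : ℕ) (α β γ δ : A)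
    (s t : Fin 2) (hst : t ≠ s)
    {l0 l1 q u : MvPolynomial (Fin 2) A}
    (hl0 : l0 = C α * X s + C β * X t) (hl1 : l1 = C γ * X s + C δ * X t)
    (hq : q = C (α * δ - β * γ))
    (hu : u = C α * l0 ^ (c+2) + C β * l1 ^ (c+2))
    (hP : C α * l0 ^ (c+1) + C δ * l1 ^ (c+1) = 0)
    (hQ : q * (l0 ^ (c+1) * l1 ^ (c+1)) = 0) :
    (l0 + u) ^ (c+2) = l0 ^ (c+2) ∧ (l0 - u) ^ (c+2) = l0 ^ (c+2) := by
  have hdl0 : pderiv t l0 = C β := by rw [hl0]; simp [hst]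
  have hdl1 : pderiv t l1 = C δ := by rw [hl1]; simp [hst]
  have hdq : pderiv t q = 0 := by rw [hq]; exact pderiv_C
  have hE : q * X s = C δ * l0 - C β * l1 := by
    rw [hq, hl0, hl1]; simp only [C_sub, C_mul]; ring
  -- the family `G`
  have hG : ∀ k e, k + e = c + 1 → q * (C β ^ k * (l0 ^ e * l1 ^ (2*k+e))) = 0 := by
    intro k
    induction k with
    | zero =>
      intro e he
      have : e = c + 1 := by omega
      subst this
      simpa using hQ
    | succ k ih =>
      intro e he
      have hGk := ih (e+1) (by omega)
      rw [show 2*k+(e+1) = 2*k+e+1 from rfl] at hGk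
      have h1 := congrArg (pderiv t) hGk
      rw [map_zero] at h1
      simp only [pderiv_mul, pderiv_pow, hdl0, hdl1, hdq, pderiv_C, zero_mul, mul_zero, zero_add,
        add_zero, Nat.add_sub_cancel, Nat.succ_sub_one] at h1
      have h2 : ((e+1 : ℕ) : MvPolynomial (Fin 2) A) *
          (q * (C β ^ (k+1) * (l0 ^ e * l1 ^ (2*(k+1)+e)))) = 0 := by
        push_cast at h1 ⊢
        linear_combination l1 * h1 - (2*((k : ℕ) : MvPolynomial (Fin 2) A) +
          ((e : ℕ) : MvPolynomial (Fin 2) A) + 1) * C δ * hGk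
      exact natCast_mul_cancel (by omega) h2
  -- the family `D`
  have hD : ∀ k j m, k + j + m = c + 1 →
      C β ^ j * ((q * X s) ^ (k+1) * (l0 ^ m * l1 ^ ((k+1)*(c+1)+j*(c+2)))) = 0 := by
    intro k
    induction k with
    | zero =>
      intro j m hjm
      have hGj := hG j m (by omega)
      have hexp : (0+1)*(c+1) + j*(c+2) = j*(c+1) + (2*j+m) := by
        rw [show c+2 = (c+1)+1 from rfl, ← hjm]; ring
      rw [hexp]
      linear_combination (X s * l1 ^ (j*(c+1))) * hGj
    | succ k ih =>
      intro j m hjm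
      have h1 := ih j (m+1) (by omega)
      have h2 := ih (j+1) m (by omega)
      linear_combination (C δ * l1 ^ (c+1)) * h1 - h2 +
        (C β ^ j * (q * X s) ^ (k+1) * l0 ^ m * l1 ^ ((k+2)*(c+1)+j*(c+2))) * hE
  -- `u = -(q * X s) * l1^(c+1)`
  have hu' : u = -(q * X s * l1 ^ (c+1)) := by
    rw [hu]
    linear_combination l0 * hP + l1 ^ (c+1) * hE
  -- the key vanishing statement
  have hkey : ∀ k m, k + m = c + 2 → 1 ≤ k → u ^ k * l0 ^ m = 0 := by
    intro k m hkm hk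
    obtain ⟨k', rfl⟩ : ∃ k', k = k' + 1 := ⟨k - 1, by omega⟩
    have hDk := hD k' 0 m (by omega)
    rw [hu']
    calc (-(q * X s * l1 ^ (c+1))) ^ (k'+1) * l0 ^ m
        = (-1 : MvPolynomial (Fin 2) A) ^ (k'+1) *
          (C β ^ 0 * ((q * X s) ^ (k'+1) * (l0 ^ m * l1 ^ ((k'+1)*(c+1)+0*(c+2))))) := by
          rw [pow_zero, one_mul, show (k'+1)*(c+1)+0*(c+2) = (c+1)*(k'+1) by ring, pow_mul]
          ring
      _ = 0 := by rw [hDk, mul_zero]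
  -- the binomial expansion collapses
  have hbin : ∀ v : MvPolynomial (Fin 2) A,
      (∀ k m, k + m = c + 2 → 1 ≤ k → v ^ k * l0 ^ m = 0) →
      (l0 + v) ^ (c+2) = l0 ^ (c+2) := by
    intro v hv
    rw [add_comm, add_pow]
    rw [Finset.sum_eq_single 0]
    · simp
    · intro b hb hb0
      rw [hv b (c+2-b) (by simp at hb; omega) (by omega), zero_mul]
    · intro h; simp at h
  constructor
  · exact hbin u hkey
  · have : l0 - u = l0 + (-u) := by ring
    rw [this]
    refine hbin (-u) ?_
    intro k m hkm hk
    rw [neg_pow]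
    rw [mul_assoc, hkey k m hkm hk, mul_zero]

/-- (Theorem 3 of the paper: the Jacobian Conjecture for `d`-linear maps, `n = 2`.)
Let `d ≥ 2` and `f(x₁,x₂) = (x₁ − (a_{1,1}x₁+a_{1,2}x₂)^d, x₂ − (a_{2,1}x₁+a_{2,2}x₂)^d)`
with coefficients in a commutative `ℚ`-algebra.  If the Jacobian determinant of `f`
is identically `1`, then the formal inverse `g` of `f` (with `g(0) = 0` and
`f(g(x)) = x`) is a polynomial map. -/
theorem jacobian_conjecture_d_linear_two_vars
    {A : Type*} [CommRing A] [Algebra ℚ A] (d : ℕ) (hd : 2 ≤ d)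
    (a : Fin 2 → Fin 2 → A)
    (f : Fin 2 → MvPolynomial (Fin 2) A)
    (hf : ∀ i, f i = X i - (C (a i 0) * X 0 + C (a i 1) * X 1) ^ d)
    (hJac : (Matrix.of fun i k : Fin 2 => pderiv k (f i)).det = 1) :
    ∃ g : Fin 2 → MvPolynomial (Fin 2) A,
      (∀ i, constantCoeff (g i) = 0) ∧
        (∀ i, aeval g (f i) = X i) ∧ (∀ i, aeval f (g i) = X i) := by
  obtain ⟨c, rfl⟩ : ∃ c, d = c + 2 := ⟨d - 2, by omega⟩
  have hn : (c + 2 : ℕ) ≠ 0 := by omega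
  -- extract the two basic identities from the Jacobian condition
  rw [Matrix.det_fin_two] at hJac
  have e0 : pderiv (0:Fin 2) (X (1:Fin 2) : MvPolynomial (Fin 2) A) = 0 :=
    pderiv_X_of_ne (by decide)
  have e1 : pderiv (1:Fin 2) (X (0:Fin 2) : MvPolynomial (Fin 2) A) = 0 :=
    pderiv_X_of_ne (by decide)
  have h21 : c + 2 - 1 = c + 1 := rfl
  simp only [Matrix.of_apply, hf, map_sub, map_add, pderiv_C_mul, pderiv_pow, pderiv_X_self,
    e0, e1, mul_zero, mul_one, zero_add, add_zero, sub_zero, zero_sub, h21] at hJac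
  have hkey : ((c+2:ℕ) : MvPolynomial (Fin 2) A) *
      ((C (a 0 0) * (C (a 0 0) * X 0 + C (a 0 1) * X 1) ^ (c+1) +
        C (a 1 1) * (C (a 1 0) * X 0 + C (a 1 1) * X 1) ^ (c+1)) -
       ((c+2:ℕ) : MvPolynomial (Fin 2) A) *
        (C (a 0 0 * a 1 1 - a 0 1 * a 1 0) *
          ((C (a 0 0) * X 0 + C (a 0 1) * X 1) ^ (c+1) *
           (C (a 1 0) * X 0 + C (a 1 1) * X 1) ^ (c+1)))) = 0 := by
    simp only [C_sub, C_mul]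
    push_cast at hJac ⊢
    linear_combination -hJac
  have hPT := natCast_mul_cancel hn hkey
  have hB0 : ((C (a 0 0) * X 0 + C (a 0 1) * X 1 : MvPolynomial (Fin 2) A)).IsHomogeneous 1 := by
    apply IsHomogeneous.add <;> simpa using (isHomogeneous_C _ _).mul (isHomogeneous_X _ _)
  have hB1 : ((C (a 1 0) * X 0 + C (a 1 1) * X 1 : MvPolynomial (Fin 2) A)).IsHomogeneous 1 := by
    apply IsHomogeneous.add <;> simpa using (isHomogeneous_C _ _).mul (isHomogeneous_X _ _)
  have hPhom : (C (a 0 0) * (C (a 0 0) * X 0 + C (a 0 1) * X 1) ^ (c+1) +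
        C (a 1 1) * (C (a 1 0) * X 0 + C (a 1 1) * X 1) ^ (c+1) :
        MvPolynomial (Fin 2) A).IsHomogeneous (c+1) := by
    apply IsHomogeneous.add
    · simpa using (isHomogeneous_C _ _).mul (hB0.pow (c+1))
    · simpa using (isHomogeneous_C _ _).mul (hB1.pow (c+1))
  have hThom : (((c+2:ℕ) : MvPolynomial (Fin 2) A) *
        (C (a 0 0 * a 1 1 - a 0 1 * a 1 0) *
          ((C (a 0 0) * X 0 + C (a 0 1) * X 1) ^ (c+1) *
           (C (a 1 0) * X 0 + C (a 1 1) * X 1) ^ (c+1)))).IsHomogeneous ((c+1)+(c+1)) := by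
    have h' := (isHomogeneous_C (Fin 2) ((c+2:ℕ) : A)).mul ((isHomogeneous_C (Fin 2)
      (a 0 0 * a 1 1 - a 0 1 * a 1 0)).mul ((hB0.pow (c+1)).mul (hB1.pow (c+1))))
    rw [map_natCast] at h'
    have hde : (0+(0+(1*(c+1)+1*(c+1)))) = (c+1)+(c+1) := by ring
    rw [hde] at h'
    exact h'
  have hPT' : (C (a 0 0) * (C (a 0 0) * X 0 + C (a 0 1) * X 1) ^ (c+1) +
        C (a 1 1) * (C (a 1 0) * X 0 + C (a 1 1) * X 1) ^ (c+1)) =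
      ((c+2:ℕ) : MvPolynomial (Fin 2) A) *
        (C (a 0 0 * a 1 1 - a 0 1 * a 1 0) *
          ((C (a 0 0) * X 0 + C (a 0 1) * X 1) ^ (c+1) *
           (C (a 1 0) * X 0 + C (a 1 1) * X 1) ^ (c+1))) := by
    linear_combination hPT
  have hP : (C (a 0 0) * (C (a 0 0) * X 0 + C (a 0 1) * X 1) ^ (c+1) +
        C (a 1 1) * (C (a 1 0) * X 0 + C (a 1 1) * X 1) ^ (c+1) :
        MvPolynomial (Fin 2) A) = 0 := by
    have h1 := congrArg (homogeneousComponent (c+1)) hPT'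
    rw [homogeneousComponent_of_mem ((mem_homogeneousSubmodule _ _).mpr hThom),
      if_neg (show ¬(c+1 = (c+1)+(c+1)) by omega),
      homogeneousComponent_of_mem ((mem_homogeneousSubmodule _ _).mpr hPhom),
      if_pos rfl] at h1
    exact h1
  have hQ : (C (a 0 0 * a 1 1 - a 0 1 * a 1 0) *
          ((C (a 0 0) * X 0 + C (a 0 1) * X 1) ^ (c+1) *
           (C (a 1 0) * X 0 + C (a 1 1) * X 1) ^ (c+1)) : MvPolynomial (Fin 2) A) = 0 := by
    apply natCast_mul_cancel hn
    linear_combination hP - hPT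
  -- apply the key lemma for both rows
  have hpow0 := main_aux c (a 0 0) (a 0 1) (a 1 0) (a 1 1) 0 1 (by decide)
    rfl rfl rfl rfl hP hQ
  have hP1 : (C (a 1 1) * (C (a 1 1) * X 1 + C (a 1 0) * X 0) ^ (c+1) +
      C (a 0 0) * (C (a 0 1) * X 1 + C (a 0 0) * X 0) ^ (c+1) : MvPolynomial (Fin 2) A) = 0 := by
    rw [show (C (a 1 1) * X 1 + C (a 1 0) * X 0 : MvPolynomial (Fin 2) A)
        = C (a 1 0) * X 0 + C (a 1 1) * X 1 by ring,
      show (C (a 0 1) * X 1 + C (a 0 0) * X 0 : MvPolynomial (Fin 2) A)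
        = C (a 0 0) * X 0 + C (a 0 1) * X 1 by ring]
    linear_combination hP
  have hQ1 : (C (a 1 1 * a 0 0 - a 1 0 * a 0 1) *
      ((C (a 1 1) * X 1 + C (a 1 0) * X 0) ^ (c+1) *
       (C (a 0 1) * X 1 + C (a 0 0) * X 0) ^ (c+1)) : MvPolynomial (Fin 2) A) = 0 := by
    rw [show a 1 1 * a 0 0 - a 1 0 * a 0 1 = a 0 0 * a 1 1 - a 0 1 * a 1 0 by ring,
      show (C (a 1 1) * X 1 + C (a 1 0) * X 0 : MvPolynomial (Fin 2) A)
        = C (a 1 0) * X 0 + C (a 1 1) * X 1 by ring,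
      show (C (a 0 1) * X 1 + C (a 0 0) * X 0 : MvPolynomial (Fin 2) A)
        = C (a 0 0) * X 0 + C (a 0 1) * X 1 by ring]
    linear_combination hQ
  have hpow1 := main_aux c (a 1 1) (a 1 0) (a 0 1) (a 0 0) 1 0 (by decide)
    rfl rfl rfl rfl hP1 hQ1
  -- the inverse
  refine ⟨fun i => X i + (C (a i 0) * X 0 + C (a i 1) * X 1) ^ (c+2), ?_, ?_, ?_⟩
  · intro i
    simp [zero_pow (show c + 2 ≠ 0 by omega)]
  · rw [Fin.forall_fin_two]
    constructor
    · rw [hf 0]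
      simp only [map_sub, map_pow, map_add, map_mul, aeval_X, aeval_C, algebraMap_eq]
      rw [show (C (a 0 0) * (X 0 + (C (a 0 0) * X 0 + C (a 0 1) * X 1) ^ (c+2)) +
          C (a 0 1) * (X 1 + (C (a 1 0) * X 0 + C (a 1 1) * X 1) ^ (c+2)) :
          MvPolynomial (Fin 2) A)
          = (C (a 0 0) * X 0 + C (a 0 1) * X 1) +
            (C (a 0 0) * (C (a 0 0) * X 0 + C (a 0 1) * X 1) ^ (c+2) +
             C (a 0 1) * (C (a 1 0) * X 0 + C (a 1 1) * X 1) ^ (c+2)) by ring,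
        hpow0.1]
      ring
    · rw [hf 1]
      simp only [map_sub, map_pow, map_add, map_mul, aeval_X, aeval_C, algebraMap_eq]
      rw [show (C (a 1 0) * (X 0 + (C (a 0 0) * X 0 + C (a 0 1) * X 1) ^ (c+2)) +
          C (a 1 1) * (X 1 + (C (a 1 0) * X 0 + C (a 1 1) * X 1) ^ (c+2)) :
          MvPolynomial (Fin 2) A)
          = (C (a 1 1) * X 1 + C (a 1 0) * X 0) +
            (C (a 1 1) * (C (a 1 1) * X 1 + C (a 1 0) * X 0) ^ (c+2) +
             C (a 1 0) * (C (a 0 1) * X 1 + C (a 0 0) * X 0) ^ (c+2)) by ring,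
        hpow1.1]
      ring
  · rw [Fin.forall_fin_two]
    constructor
    · simp only [map_add, map_pow, map_mul, aeval_X, aeval_C, algebraMap_eq]
      rw [hf 0, hf 1]
      rw [show (C (a 0 0) * (X 0 - (C (a 0 0) * X 0 + C (a 0 1) * X 1) ^ (c+2)) +
          C (a 0 1) * (X 1 - (C (a 1 0) * X 0 + C (a 1 1) * X 1) ^ (c+2)) :
          MvPolynomial (Fin 2) A)
          = (C (a 0 0) * X 0 + C (a 0 1) * X 1) -
            (C (a 0 0) * (C (a 0 0) * X 0 + C (a 0 1) * X 1) ^ (c+2) +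
             C (a 0 1) * (C (a 1 0) * X 0 + C (a 1 1) * X 1) ^ (c+2)) by ring,
        hpow0.2]
      ring
    · simp only [map_add, map_pow, map_mul, aeval_X, aeval_C, algebraMap_eq]
      rw [hf 0, hf 1]
      rw [show (C (a 1 0) * (X 0 - (C (a 0 0) * X 0 + C (a 0 1) * X 1) ^ (c+2)) +
          C (a 1 1) * (X 1 - (C (a 1 0) * X 0 + C (a 1 1) * X 1) ^ (c+2)) :
          MvPolynomial (Fin 2) A)
          = (C (a 1 1) * X 1 + C (a 1 0) * X 0) -
            (C (a 1 1) * (C (a 1 1) * X 1 + C (a 1 0) * X 0) ^ (c+2) +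
             C (a 1 0) * (C (a 0 1) * X 1 + C (a 0 0) * X 0) ^ (c+2)) by ring,
        hpow1.2]
      ring
end

section
/- Let A be the 2×2 matrix of indeterminates and d ≥ 1. If all the generators of J_{d,2} vanish (equivalently det(D(f)) = 1 identically), then in the quotient ring R/J_{d,2}, for every u₀ ∈ {1,2} and every (2(d−1))-tuple of indices, the product Σ_{w} a_{u₀,w} a_{w,u₂} Π_j a_{u₀,ν(1,j)} a_{w,ν(2,j)} equals 0; in particular, every monomial of the form a_{u₀,w₁}a_{w₁,w₂}·(product of 2(d−1) further entries from rows u₀ and w₁) arising as a tree weight of height ≥ 2 maps to 0 in R/J_{d,2}. -/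
/-!
Modulo `J = J_{d,2}` the Jacobian determinant is identically `1`, so it takes the value `1` at
every point of every commutative `R/J`-algebra. With `d = e + 1`, `L_i = a_{i0} x + a_{i1} y` and
`Δ = det a`, its value at `(t, x, y)` is
`1 - d t^d (a_{00} L_0^e + a_{11} L_1^e) + d² t^{2d} Δ L_0^e L_1^e` (this is `powerTrace` and
`powerDet`); taking `t = 1, 2` (we are over `ℚ`) shows that both brackets vanish at every point.
The coefficients of the first one at the generic point `(X, 1)` are the relations
`a_{00} a_{00}^k a_{01}^{e-k} + a_{11} a_{10}^k a_{11}^{e-k} = 0`. Two consecutive ones combine to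
`Δ a_{00}^{k+1} a_{01}^{e-k-1} = 0` and `Δ a_{10}^k a_{11}^{e-k} = 0` for `k < e`, so the second
bracket at `x = y = 1` collapses to `Δ a_{01}^e a_{10}^e = 0`.

A fern element is `a_{u₀0}^{p₀} a_{u₀1}^{p₁} Σ_w a_{u₀w} a_{w0}^{m₀} a_{w1}^{m₁}` with
`p₀ + p₁ = e` and `m₀ + m₁ = d`. The sum is a multiple of one relation, or such a multiple minus
`Δ` times `a_{10}^e` (resp. `a_{01}^e`), and the monomials above kill the latter.
-/

open Finset MvPolynomial

lemma MvPolynomial.eval₂_eq_of_map_coeff_eq_zero {σ R T : Type*} [CommSemiring R]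
    [CommSemiring T] (φ : R →+* T) (y : σ → T) {p : MvPolynomial σ R}
    (h : ∀ m ≠ 0, φ (coeff m p) = 0) : eval₂ φ y p = φ (coeff 0 p) := by
  rw [eval₂_eq, Finset.sum_eq_single 0 (fun m _ hm => by rw [h m hm, zero_mul])]
  · simp
  · intro h0
    rw [notMem_support_iff.mp h0, map_zero, zero_mul]

open Polynomial in
lemma Polynomial.coeff_C_mul_X_add_C_pow {S : Type*} [CommRing S] (a b : S) (e k : ℕ) :
    ((C a * X + C b) ^ e).coeff k = e.choose k * (a ^ k * b ^ (e - k)) := by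
  have hterm (m : ℕ) : (C a * X) ^ m * C b ^ (e - m) * (e.choose m : S[X]) =
      C (e.choose m * (a ^ m * b ^ (e - m))) * X ^ m := by
    simp only [map_mul, map_pow, map_natCast]
    ring
  simp_rw [add_pow, finsetSum_coeff, hterm, coeff_C_mul_X_pow, Finset.sum_ite_eq, Finset.mem_range]
  split_ifs with hk
  · rfl
  · rw [Nat.choose_eq_zero_of_lt (by omega), Nat.cast_zero, zero_mul]

lemma Fin.exists_prod_comp_eq_pow_mul_pow {n : ℕ} (ν : Fin n → Fin 2) :
    ∃ p₀ p₁ : ℕ, p₀ + p₁ = n ∧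
      ∀ {M : Type*} [CommMonoid M] (r : Fin 2 → M), ∏ j, r (ν j) = r 0 ^ p₀ * r 1 ^ p₁ := by
  refine ⟨#{j | ν j = 0}, #{j | ν j = 1}, ?_, fun r => ?_⟩
  · simpa [Fin.sum_univ_two] using
      (Finset.card_eq_sum_card_fiberwise (f := ν) (s := univ) (t := univ) (by simp)).symm
  · simp [← Finset.prod_fiberwise' univ ν r, Fin.prod_univ_two]

section RatAlgebra

variable {T : Type*} [CommRing T] [Algebra ℚ T]

lemma eq_zero_of_natCast_mul_eq_zero {n : ℕ} (hn : n ≠ 0) {a : T} (h : (n : T) * a = 0) :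
    a = 0 := by
  rw [← map_natCast (algebraMap ℚ T), ← Algebra.smul_def] at h
  simpa [hn] using h

lemma eq_zero_of_forall_pow_mul_eq {n : ℕ} (hn : n ≠ 0) {α β : T}
    (h : ∀ t : T, t ^ n * α = t ^ (2 * n) * β) : α = 0 ∧ β = 0 := by
  have h₁ := h 1
  have h₂ := h 2
  have hq : (2 ^ n * (2 ^ n - 1) : ℚ) ≠ 0 := by
    have : (1 : ℚ) < 2 ^ n := one_lt_pow₀ one_lt_two hn
    positivity
  have hα : (2 ^ n * (2 ^ n - 1) : ℚ) • α = 0 := by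
    rw [Algebra.smul_def]
    simp only [map_mul, map_pow, map_sub, map_ofNat, map_one]
    linear_combination 2 ^ (2 * n) * h₁ - h₂
  obtain rfl : α = 0 := by simpa [hq] using hα
  exact ⟨rfl, by simpa using h₁.symm⟩

end RatAlgebra

section TwoByTwo

variable {S : Type*} [CommRing S]

def powerTrace (A : Matrix (Fin 2) (Fin 2) S) (e : ℕ) (x y : S) : S :=
  A 0 0 * (A 0 0 * x + A 0 1 * y) ^ e + A 1 1 * (A 1 0 * x + A 1 1 * y) ^ e

def powerDet (A : Matrix (Fin 2) (Fin 2) S) (e : ℕ) (x y : S) : S :=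
  A.det * ((A 0 0 * x + A 0 1 * y) ^ e * (A 1 0 * x + A 1 1 * y) ^ e)

def PowerTraceRelations (A : Matrix (Fin 2) (Fin 2) S) (e : ℕ) : Prop :=
  ∀ x y, x + y = e → A 0 0 * (A 0 0 ^ x * A 0 1 ^ y) + A 1 1 * (A 1 0 ^ x * A 1 1 ^ y) = 0

namespace PowerTraceRelations

variable {A : Matrix (Fin 2) (Fin 2) S} {e : ℕ}

lemma det_mul_row_zero (h : PowerTraceRelations A e) {x y : ℕ} (hxy : x + 1 + y = e) :
    A.det * (A 0 0 ^ (x + 1) * A 0 1 ^ y) = 0 := by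
  rw [Matrix.det_fin_two]
  linear_combination A 1 1 * h (x + 1) y hxy - A 1 0 * h x (y + 1) (by omega)

lemma det_mul_row_one (h : PowerTraceRelations A e) {x y : ℕ} (hxy : x + 1 + y = e) :
    A.det * (A 1 0 ^ x * A 1 1 ^ (y + 1)) = 0 := by
  rw [Matrix.det_fin_two]
  linear_combination A 0 0 * h x (y + 1) (by omega) - A 0 1 * h (x + 1) y hxy

lemma det_mul_add_pow_row_zero (h : PowerTraceRelations A e) (u v : S) :
    A.det * (A 0 0 * u + A 0 1 * v) ^ e = A.det * (A 0 1 * v) ^ e := by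
  rw [add_pow, Finset.sum_range_succ', mul_add, Finset.mul_sum, Finset.sum_eq_zero]
  · simp
  intro m hm
  rw [Finset.mem_range] at hm
  have hrow := h.det_mul_row_zero (x := m) (y := e - (m + 1)) (by omega)
  linear_combination (u ^ (m + 1) * v ^ (e - (m + 1)) * (e.choose (m + 1) : S)) * hrow

lemma det_mul_add_pow_row_one (h : PowerTraceRelations A e) (u v : S) :
    A.det * (A 1 0 * u + A 1 1 * v) ^ e = A.det * (A 1 0 * u) ^ e := by
  rw [add_pow, Finset.sum_range_succ, mul_add, Finset.mul_sum, Finset.sum_eq_zero]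
  · simp
  intro m hm
  rw [Finset.mem_range] at hm
  obtain ⟨y, hy⟩ : ∃ y, e - m = y + 1 := ⟨e - m - 1, by omega⟩
  have hrow := h.det_mul_row_one (x := m) (y := y) (by omega)
  rw [hy]
  linear_combination (u ^ m * v ^ (y + 1) * (e.choose m : S)) * hrow

lemma det_mul_pow_mul_pow (h : PowerTraceRelations A e) (hdet : powerDet A e 1 1 = 0) :
    A.det * (A 0 1 ^ e * A 1 0 ^ e) = 0 :=
  calc A.det * (A 0 1 ^ e * A 1 0 ^ e)
      = A 0 1 ^ e * (A.det * (A 1 0 * 1 + A 1 1 * 1) ^ e) := by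
        rw [h.det_mul_add_pow_row_one]; ring
    _ = A.det * (A 0 0 * 1 + A 0 1 * 1) ^ e * (A 1 0 * 1 + A 1 1 * 1) ^ e := by
        rw [h.det_mul_add_pow_row_zero]; ring
    _ = 0 := by rw [mul_assoc]; exact hdet

lemma row_pow_mul_sum_eq_zero (h : PowerTraceRelations A e)
    (hdet : A.det * (A 0 1 ^ e * A 1 0 ^ e) = 0) (u : Fin 2) {p₀ p₁ m₀ m₁ : ℕ}
    (hp : p₀ + p₁ = e) (hm : m₀ + m₁ = e + 1) :
    A u 0 ^ p₀ * A u 1 ^ p₁ * ∑ w, A u w * (A w 0 ^ m₀ * A w 1 ^ m₁) = 0 := by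
  rw [Fin.sum_univ_two]
  fin_cases u <;> simp only [Fin.zero_eta, Fin.mk_one]
  · rcases m₁ with _ | m₁
    · obtain rfl : m₀ = e + 1 := by omega
      have hdet' : A.det * (A 0 0 ^ p₀ * A 0 1 ^ p₁) * A 1 0 ^ e = 0 := by
        rcases p₀ with _ | p₀
        · obtain rfl : p₁ = e := by omega
          linear_combination hdet
        · rw [h.det_mul_row_zero (by omega), zero_mul]
      linear_combination (A 0 0 ^ p₀ * A 0 1 ^ p₁ * A 0 0) * h e 0 (by omega) - hdet'
        + A 0 0 ^ p₀ * A 0 1 ^ p₁ * A 1 0 ^ e * Matrix.det_fin_two A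
    · linear_combination (A 0 0 ^ p₀ * A 0 1 ^ p₁ * A 0 1) * h m₀ m₁ (by omega)
  · rcases m₀ with _ | m₀
    · obtain rfl : m₁ = e + 1 := by omega
      have hdet' : A.det * (A 1 0 ^ p₀ * A 1 1 ^ p₁) * A 0 1 ^ e = 0 := by
        rcases p₁ with _ | p₁
        · obtain rfl : p₀ = e := by omega
          linear_combination hdet
        · rw [h.det_mul_row_one (by omega), zero_mul]
      linear_combination (A 1 0 ^ p₀ * A 1 1 ^ p₁ * A 1 1) * h 0 e (by omega) - hdet'
        + A 1 0 ^ p₀ * A 1 1 ^ p₁ * A 0 1 ^ e * Matrix.det_fin_two A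
    · linear_combination (A 1 0 ^ p₀ * A 1 1 ^ p₁ * A 1 0) * h m₀ m₁ (by omega)

lemma fern_eq_zero (h : PowerTraceRelations A e) (hdet : A.det * (A 0 1 ^ e * A 1 0 ^ e) = 0)
    (u₀ u₂ : Fin 2) (ν : Fin 2 → Fin e → Fin 2) :
    ∑ w, A u₀ w * A w u₂ * ∏ j, A u₀ (ν 0 j) * A w (ν 1 j) = 0 := by
  obtain ⟨p₀, p₁, hp, hprod₀⟩ := Fin.exists_prod_comp_eq_pow_mul_pow (ν 0)
  set ν₁ : Fin (e + 1) → Fin 2 := Fin.cons u₂ (ν 1) with hν₁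
  obtain ⟨m₀, m₁, hm, hprod₁⟩ := Fin.exists_prod_comp_eq_pow_mul_pow ν₁
  calc ∑ w, A u₀ w * A w u₂ * ∏ j, A u₀ (ν 0 j) * A w (ν 1 j)
      = (∏ j, A u₀ (ν 0 j)) * ∑ w, A u₀ w * ∏ j, A w (ν₁ j) := by
        rw [mul_sum]
        refine Finset.sum_congr rfl fun w _ => ?_
        rw [Fin.prod_univ_succ, prod_mul_distrib]
        simp only [hν₁, Fin.cons_zero, Fin.cons_succ]
        ring
    _ = A u₀ 0 ^ p₀ * A u₀ 1 ^ p₁ * ∑ w, A u₀ w * (A w 0 ^ m₀ * A w 1 ^ m₁) := by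
        rw [hprod₀ (A u₀)]
        exact congrArg _ (Finset.sum_congr rfl fun w _ => by rw [hprod₁ (A w)])
    _ = 0 := h.row_pow_mul_sum_eq_zero hdet u₀ hp hm

end PowerTraceRelations

end TwoByTwo

lemma constantCoeff_det_Df (d : ℕ) : constantCoeff (Df d).det = 1 := by
  have h : (constantCoeff : MvPolynomial (Fin 3) Rring →+* Rring).mapMatrix (Df d) = 1 := by
    ext i k
    simp [Df, Matrix.one_apply]
  rw [RingHom.map_det, h, Matrix.det_one]

lemma eval₂_det_Df_eq_one {T : Type*} [CommRing T] {d : ℕ} (φ : Rring →+* T)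
    (hφ : Jideal d ≤ RingHom.ker φ) (y : Fin 3 → T) : eval₂ φ y (Df d).det = 1 := by
  rw [eval₂_eq_of_map_coeff_eq_zero φ y fun m hm => hφ (Ideal.subset_span ⟨m, hm, rfl⟩),
    ← constantCoeff_eq, constantCoeff_det_Df, map_one]

lemma pow_mul_powerTrace_eq_pow_mul_powerDet {T : Type*} [CommRing T] {e : ℕ}
    (φ : Rring →+* T) (hφ : Jideal (e + 1) ≤ RingHom.ker φ) (t x y : T) :
    t ^ (e + 1) * ((e + 1) * powerTrace ((Matrix.of aa).map φ) e x y) =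
      t ^ (2 * (e + 1)) * ((e + 1) ^ 2 * powerDet ((Matrix.of aa).map φ) e x y) := by
  have h := eval₂_det_Df_eq_one φ hφ ![t, x, y]
  rw [← coe_eval₂Hom, RingHom.map_det, Matrix.det_fin_two] at h
  simp only [Df, Nat.cast_add, Nat.cast_one, Fin.isValue, add_tsub_cancel_right, mul_pow,
    RingHom.mapMatrix_apply, coe_eval₂Hom, Matrix.map_apply, Matrix.of_apply, ↓reduceIte,
    eval₂_sub, eval₂_one, eval₂_mul, eval₂_add, eval₂_natCast, eval₂_X, eval₂_C, eval₂_pow,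
    eval₂_neg, Matrix.cons_val_zero, Matrix.cons_val_one, Matrix.cons_val, zero_ne_one,
    one_ne_zero, zero_sub, mul_neg, neg_mul, neg_neg, powerTrace, powerDet, Matrix.det_fin_two]
    at h ⊢
  linear_combination -h

lemma powerTrace_eq_zero_and_powerDet_eq_zero {T : Type*} [CommRing T] [Algebra ℚ T] {e : ℕ}
    (φ : Rring →+* T) (hφ : Jideal (e + 1) ≤ RingHom.ker φ) (x y : T) :
    powerTrace ((Matrix.of aa).map φ) e x y = 0 ∧ powerDet ((Matrix.of aa).map φ) e x y = 0 := by
  obtain ⟨htr, hdet⟩ := eq_zero_of_forall_pow_mul_eq e.succ_ne_zero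
    fun t => pow_mul_powerTrace_eq_pow_mul_powerDet φ hφ t x y
  exact ⟨eq_zero_of_natCast_mul_eq_zero e.succ_ne_zero (by exact_mod_cast htr),
    eq_zero_of_natCast_mul_eq_zero (pow_ne_zero 2 e.succ_ne_zero) (by exact_mod_cast hdet)⟩

noncomputable def quotMatrix (d : ℕ) : Matrix (Fin 2) (Fin 2) (Rring ⧸ Jideal d) :=
  (Matrix.of aa).map (Ideal.Quotient.mk (Jideal d))

lemma powerTraceRelations_quotMatrix (e : ℕ) : PowerTraceRelations (quotMatrix (e + 1)) e := by
  intro x y hxy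
  have hker :
      Jideal (e + 1) ≤ RingHom.ker (Polynomial.C.comp (Ideal.Quotient.mk (Jideal (e + 1)))) :=
    fun r hr => by
      rw [RingHom.mem_ker, RingHom.comp_apply, Ideal.Quotient.eq_zero_iff_mem.mpr hr, map_zero]
  have hzero := powerTrace_eq_zero_and_powerDet_eq_zero
    (T := Polynomial (Rring ⧸ Jideal (e + 1))) (e := e) _ hker
  have htr := congrArg (Polynomial.coeff · x) (hzero Polynomial.X 1).1
  simp only [powerTrace, Matrix.map_apply, RingHom.comp_apply, mul_one, Polynomial.coeff_add,
    Polynomial.coeff_C_mul, Polynomial.coeff_C_mul_X_add_C_pow, Polynomial.coeff_zero] at htr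
  rw [show e - x = y by omega] at htr
  simp only [quotMatrix, Matrix.map_apply]
  have hc : e.choose x ≠ 0 := (Nat.choose_pos (by omega)).ne'
  exact eq_zero_of_natCast_mul_eq_zero hc (by linear_combination htr)

lemma det_mul_pow_mul_pow_quotMatrix (e : ℕ) :
    (quotMatrix (e + 1)).det * (quotMatrix (e + 1) 0 1 ^ e * quotMatrix (e + 1) 1 0 ^ e) = 0 := by
  have hzero := powerTrace_eq_zero_and_powerDet_eq_zero
    (T := Rring ⧸ Jideal (e + 1)) (e := e) _ (Ideal.mk_ker).ge
  exact (powerTraceRelations_quotMatrix e).det_mul_pow_mul_pow (hzero 1 1).2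

/-- Quotient-ring reformulation of Lemma 3: in `R/J_{d,2}` the image of every fern
element `z(fern_{d,2},(u₀,u₂;ν)) = Σ_w a_{u₀,w}a_{w,u₂} Π_j a_{u₀,ν(1,j)}a_{w,ν(2,j)}`
is zero; i.e. every tree weight of height ≥ 2 maps to `0` in `R/J_{d,2}`. -/
theorem fern_element_zero_in_quotient (d : ℕ) (hd : 1 ≤ d)
    (u₀ u₂ : Fin 2) (ν : Fin 2 → Fin (d - 1) → Fin 2) :
    Ideal.Quotient.mk (Jideal d)
        (∑ w : Fin 2, aa u₀ w * aa w u₂ * ∏ j, aa u₀ (ν 0 j) * aa w (ν 1 j)) = 0 := by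
  obtain ⟨e, rfl⟩ : ∃ e, d = e + 1 := ⟨d - 1, by omega⟩
  simp only [map_sum, map_mul, map_prod]
  exact (powerTraceRelations_quotMatrix e).fern_eq_zero (det_mul_pow_mul_pow_quotMatrix e) u₀ u₂ ν
end
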